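/- For every real time t, the quantum resources of the evolved state are determined by the quantum state texture of the battery state via: E(t) = 2√(1/2 − T_tr(t)²), C₁(t) = 2√(1/2 − T_tr(t)²), S(t) = 4 − 8 T_tr(t)², and B(t) = 2√(3 − 4 T_tr(t)²) − 2. -/

import Mathlib

/-!
Unitarity of the evolution gives `|α|² + |β|² = 1`, so `p(1 - p) = |α|²|β|²`. The matrix
`ρ_b - f₁ = [[p - 1/2, -1/2], [-1/2, 1/2 - p]]` is symmetric with scalar square
`((p - 1/2)² + 1/4) • 1`, hence its trace norm is `2√((p - 1/2)² + 1/4)` and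
`T_tr² = 1/2 - p(1 - p) = 1/2 - |α|²|β|²`. Every resource is a function of `|α|²|β|²`.
-/

open Complex Matrix

section

open scoped ComplexOrder

/-- The square root of a positive semidefinite matrix, as `Matrix.PosSemidef.sqrt` was defined
in Mathlib (December 2024); that declaration has since been removed. -/
noncomputable def Matrix.PosSemidef.sqrt {n 𝕜 : Type*} [Fintype n] [DecidableEq n] [RCLike 𝕜]
    {A : Matrix n n 𝕜} (hA : A.PosSemidef) : Matrix n n 𝕜 :=
  hA.1.eigenvectorUnitary.1 * diagonal ((↑) ∘ (√·) ∘ hA.1.eigenvalues) *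
    (star hA.1.eigenvectorUnitary : Matrix n n 𝕜)

end

section

open scoped ComplexOrder

theorem Matrix.PosSemidef.sqrt_eq_cfc {n 𝕜 : Type*} [Fintype n] [DecidableEq n] [RCLike 𝕜]
    {A : Matrix n n 𝕜} (hA : A.PosSemidef) : hA.sqrt = cfc Real.sqrt A := by
  rw [hA.1.cfc_eq, Matrix.IsHermitian.cfc, Unitary.conjStarAlgAut_apply]
  rfl

theorem Matrix.PosSemidef.sqrt_eq_algebraMap {n 𝕜 : Type*} [Fintype n] [DecidableEq n]
    [RCLike 𝕜] {A : Matrix n n 𝕜} (hA : A.PosSemidef) {c : ℝ} (hc : A = algebraMap ℝ _ c) :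
    hA.sqrt = algebraMap ℝ _ (√c) := by
  rw [hA.sqrt_eq_cfc, hc, cfc_algebraMap]

end

theorem diag_sub_half_ones_mul_transpose (p : ℝ) :
    (!![p, 0; 0, 1 - p] - (1 / 2 : ℝ) • !![1, 1; 1, 1]) *
        (!![p, 0; 0, 1 - p] - (1 / 2 : ℝ) • !![1, 1; 1, 1])ᵀ =
      algebraMap ℝ (Matrix (Fin 2) (Fin 2) ℝ) ((p - 1 / 2) ^ 2 + 1 / 4) := by
  rw [Matrix.algebraMap_eq_diagonal]
  ext i j
  fin_cases i <;> fin_cases j <;> simp [Matrix.mul_apply, Fin.sum_univ_two] <;> ring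

theorem half_trace_sqrt_diag_sub_half_ones (p : ℝ) {A : Matrix (Fin 2) (Fin 2) ℝ}
    (hA : A.PosSemidef)
    (hAp : A = (!![p, 0; 0, 1 - p] - (1 / 2 : ℝ) • !![1, 1; 1, 1]) *
        (!![p, 0; 0, 1 - p] - (1 / 2 : ℝ) • !![1, 1; 1, 1])ᵀ) :
    1 / 2 * hA.sqrt.trace = √((p - 1 / 2) ^ 2 + 1 / 4) := by
  rw [hA.sqrt_eq_algebraMap (hAp.trans (diag_sub_half_ones_mul_transpose p)),
    Matrix.algebraMap_eq_diagonal, Matrix.trace_diagonal, Fin.sum_univ_two]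
  simp only [Pi.algebraMap_apply, Algebra.algebraMap_self, RingHom.id_apply]
  ring

theorem norm_exp_neg_I_mul_ofReal (x : ℝ) : ‖exp (-I * x)‖ = 1 := by
  simpa [neg_mul, mul_comm] using norm_exp_ofReal_mul_I (-x)

/-- The columns `(x, 1)` and `(y, 1)` are orthogonal when `x * y = -1`, and their squared lengths
add up to `(x - y) ^ 2`. -/
theorem norm_sq_add_norm_sq_of_mul_eq_neg_one {u v : ℂ} (hu : ‖u‖ = 1) (hv : ‖v‖ = 1)
    {x y : ℝ} (hxy : x * y = -1) (hne : x ≠ y) :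
    ‖(u * x - v * y) / (x - y)‖ ^ 2 + ‖(u - v) / (x - y)‖ ^ 2 = 1 := by
  have hu' : u.re * u.re + u.im * u.im = 1 := by
    rw [← Complex.normSq_apply, ← Complex.sq_norm, hu, one_pow]
  have hv' : v.re * v.re + v.im * v.im = 1 := by
    rw [← Complex.normSq_apply, ← Complex.sq_norm, hv, one_pow]
  have hd : (x : ℂ) - y = ((x - y : ℝ) : ℂ) := by push_cast; ring
  rw [Complex.sq_norm, Complex.sq_norm, Complex.normSq_div, Complex.normSq_div, hd,
    Complex.normSq_ofReal, ← add_div, div_eq_one_iff_eq (by simpa [sub_eq_zero] using hne)]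
  simp only [Complex.normSq_apply, Complex.sub_re, Complex.sub_im, Complex.mul_re,
    Complex.mul_im, Complex.ofReal_re, Complex.ofReal_im]
  linear_combination x ^ 2 * hu' + y ^ 2 * hv' + hu' + hv' -
    2 * (u.re * v.re + u.im * v.im) * hxy + 2 * hxy

theorem eigenratio_mul_eigenratio {J Δ Ω : ℝ} (hJ : J ≠ 0) (hΩ : Ω ^ 2 = J ^ 2 + Δ ^ 2) :
    (Δ + Ω) / J * ((Δ - Ω) / J) = -1 := by
  field_simp
  linear_combination -hΩ

theorem stmt_16_general (J1 t : ℝ) (hJ1 : J1 ≠ 0)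
    (Δ Ω e1 e2 ξ1 ξ2 p : ℝ) (α β : ℂ)
    (hΩ : Ω = Real.sqrt (J1 ^ 2 + Δ ^ 2))
    (hξ1 : ξ1 = (Δ + Ω) / J1) (hξ2 : ξ2 = (Δ - Ω) / J1)
    (hα : α = (Complex.exp (-Complex.I * ((e1 * t : ℝ) : ℂ)) * (ξ1 : ℂ) -
        Complex.exp (-Complex.I * ((e2 * t : ℝ) : ℂ)) * (ξ2 : ℂ)) / ((ξ1 : ℂ) - (ξ2 : ℂ)))
    (hβ : β = (Complex.exp (-Complex.I * ((e1 * t : ℝ) : ℂ)) -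
        Complex.exp (-Complex.I * ((e2 * t : ℝ) : ℂ))) / ((ξ1 : ℂ) - (ξ2 : ℂ)))
    (hp : p = ‖α‖ ^ 2)
    (ρb f1 : Matrix (Fin 2) (Fin 2) ℝ)
    (hρb : ρb = !![p, 0; 0, 1 - p])
    (hf1 : f1 = (1 / 2 : ℝ) • !![1, 1; 1, 1])
    (hA : ((ρb - f1) * (ρb - f1)ᵀ).PosSemidef)
    (Ttr : ℝ) (hTtr : Ttr = (1 / 2) * hA.sqrt.trace)
    (E C1 S B : ℝ)
    (hE : E = 2 * ‖α‖ * ‖β‖)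
    (hC1 : C1 = 2 * ‖α‖ * ‖β‖)
    (hS : S = 8 * ‖α‖ ^ 2 * ‖β‖ ^ 2)
    (hB : B = 2 * Real.sqrt (1 + 4 * ‖α‖ ^ 2 * ‖β‖ ^ 2) - 2) :
    E = 2 * Real.sqrt (1 / 2 - Ttr ^ 2) ∧
    C1 = 2 * Real.sqrt (1 / 2 - Ttr ^ 2) ∧
    S = 4 - 8 * Ttr ^ 2 ∧
    B = 2 * Real.sqrt (3 - 4 * Ttr ^ 2) - 2 := by
  have hΩsq : Ω ^ 2 = J1 ^ 2 + Δ ^ 2 := hΩ ▸ Real.sq_sqrt (by positivity)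
  have hΩpos : 0 < Ω := hΩ ▸ Real.sqrt_pos.2 (by positivity)
  have hξ : ξ1 * ξ2 = -1 := hξ1 ▸ hξ2 ▸ eigenratio_mul_eigenratio hJ1 hΩsq
  have hξne : ξ1 ≠ ξ2 := by
    rw [hξ1, hξ2]
    intro h
    linarith [(div_left_inj' hJ1).1 h]
  have hunit : ‖α‖ ^ 2 + ‖β‖ ^ 2 = 1 :=
    hα ▸ hβ ▸ norm_sq_add_norm_sq_of_mul_eq_neg_one (norm_exp_neg_I_mul_ofReal _)
      (norm_exp_neg_I_mul_ofReal _) hξ hξne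
  have hT : Ttr ^ 2 = 1 / 2 - ‖α‖ ^ 2 * ‖β‖ ^ 2 := by
    rw [hTtr, half_trace_sqrt_diag_sub_half_ones p hA (by rw [hρb, hf1]),
      Real.sq_sqrt (by positivity), hp]
    linear_combination ‖α‖ ^ 2 * hunit
  have hαβ : ‖α‖ * ‖β‖ = √(1 / 2 - Ttr ^ 2) := by
    rw [hT, sub_sub_cancel, ← mul_pow, Real.sqrt_sq (by positivity)]
  refine ⟨?_, ?_, ?_, ?_⟩
  · rw [hE, mul_assoc, hαβ]
  · rw [hC1, mul_assoc, hαβ]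
  · rw [hS, hT]; ring
  · rw [hB, hT]; ring_nf

theorem stmt_16 (ωb ωc J1 J2 t : ℝ) (hωb : 0 < ωb) (hωc : 0 < ωc) (hJ1 : J1 ≠ 0)
    (Δ Ω e1 e2 ξ1 ξ2 p : ℝ) (α β : ℂ)
    (hΔ : Δ = ωb - ωc) (hΩ : Ω = Real.sqrt (J1 ^ 2 + Δ ^ 2))
    (he1 : e1 = Ω - J2) (he2 : e2 = -Ω - J2)
    (hξ1 : ξ1 = (Δ + Ω) / J1) (hξ2 : ξ2 = (Δ - Ω) / J1)
    (hα : α = (Complex.exp (-Complex.I * ((e1 * t : ℝ) : ℂ)) * (ξ1 : ℂ) -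
        Complex.exp (-Complex.I * ((e2 * t : ℝ) : ℂ)) * (ξ2 : ℂ)) / ((ξ1 : ℂ) - (ξ2 : ℂ)))
    (hβ : β = (Complex.exp (-Complex.I * ((e1 * t : ℝ) : ℂ)) -
        Complex.exp (-Complex.I * ((e2 * t : ℝ) : ℂ))) / ((ξ1 : ℂ) - (ξ2 : ℂ)))
    (hp : p = ‖α‖ ^ 2)
    (ρb f1 : Matrix (Fin 2) (Fin 2) ℝ)
    (hρb : ρb = !![p, 0; 0, 1 - p])
    (hf1 : f1 = (1 / 2 : ℝ) • !![1, 1; 1, 1])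
    (hA : ((ρb - f1) * (ρb - f1)ᵀ).PosSemidef)
    (Ttr : ℝ) (hTtr : Ttr = (1 / 2) * hA.sqrt.trace)
    (E C1 S B : ℝ)
    (hE : E = 2 * ‖α‖ * ‖β‖)
    (hC1 : C1 = 2 * ‖α‖ * ‖β‖)
    (hS : S = 8 * ‖α‖ ^ 2 * ‖β‖ ^ 2)
    (hB : B = 2 * Real.sqrt (1 + 4 * ‖α‖ ^ 2 * ‖β‖ ^ 2) - 2) :
    E = 2 * Real.sqrt (1 / 2 - Ttr ^ 2) ∧
    C1 = 2 * Real.sqrt (1 / 2 - Ttr ^ 2) ∧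
    S = 4 - 8 * Ttr ^ 2 ∧
    B = 2 * Real.sqrt (3 - 4 * Ttr ^ 2) - 2 :=
  stmt_16_general J1 t hJ1 Δ Ω e1 e2 ξ1 ξ2 p α β hΩ hξ1 hξ2 hα hβ hp ρb f1 hρb hf1 hA Ttr hTtr E C1
    S B hE hC1 hS hB
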